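/- arXiv:2411.16491 — 4 statements merged into one kernel-verified Lean document; each statement's English description precedes it below -/
import Mathlib

section
/- There exists a constant L_ψ > 0, depending only on m_l, c_l, M_l, M_r and |u⋆|, such that |ψ(x,z) − ψ(x,z′)| ≤ L_ψ(1 + |z| + |z′|)|z − z′| for all x ∈ K and all z, z′ ∈ H. -/
open scoped InnerProductSpace

/-- There exists a constant `L_ψ > 0` such that
`|ψ(x,z) − ψ(x,z′)| ≤ L_ψ (1 + ‖z‖ + ‖z′‖) ‖z − z′‖` for all `x ∈ K`, `z, z′ ∈ H`. -/
theorem hamiltonian_locally_lipschitz_in_z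
    {K H U : Type*}
    [NormedAddCommGroup K] [InnerProductSpace ℝ K] [CompleteSpace K]
    [TopologicalSpace.SeparableSpace K]
    [NormedAddCommGroup H] [InnerProductSpace ℝ H] [CompleteSpace H]
    [TopologicalSpace.SeparableSpace H]
    [NormedAddCommGroup U] [InnerProductSpace ℝ U] [CompleteSpace U]
    [TopologicalSpace.SeparableSpace U]
    (r : K → U → H) (l : K → U → ℝ)
    (M_r m_l c_l M_l : ℝ)
    (hMr : 0 < M_r) (hml : 0 < m_l) (hcl : 0 < c_l) (hMl : 0 < M_l)
    (hr : ∀ x u, ‖r x u‖ ≤ M_r * (1 + ‖u‖))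
    (ustar : U) (hustar : ∀ x, r x ustar = 0)
    (hl_lb : ∀ x u, m_l * ‖u‖ ^ 2 - c_l ≤ l x u)
    (hl_ub : ∀ x u, l x u ≤ M_l * (1 + ‖u‖ ^ 2))
    (ψ : K → H → ℝ)
    (hψ : ∀ x z, ψ x z = ⨅ u : U, (l x u - ⟪z, r x u⟫_ℝ)) :
    ∃ L_ψ > 0, ∀ (x : K) (z z' : H),
      |ψ x z - ψ x z'| ≤ L_ψ * (1 + ‖z‖ + ‖z'‖) * ‖z - z'‖ := by
  set A : ℝ := M_l * (1 + ‖ustar‖ ^ 2) + 1 + c_l with hA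
  have hA0 : 0 < A := by positivity
  set L : ℝ := M_r * (2 + A / m_l + 2 * M_r / m_l) with hL
  have hL0 : 0 < L := by positivity
  refine ⟨L, hL0, fun x z z' => ?_⟩
  have hbdd : ∀ v : H, BddBelow (Set.range fun u : U => l x u - ⟪v, r x u⟫_ℝ) := by
    intro v
    refine ⟨-c_l - ‖v‖ * M_r - (‖v‖ * M_r) ^ 2 / (4 * m_l), ?_⟩
    rintro _ ⟨u, rfl⟩
    have h1 : ⟪v, r x u⟫_ℝ ≤ ‖v‖ * (M_r * (1 + ‖u‖)) :=
      (real_inner_le_norm v (r x u)).trans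
        (mul_le_mul_of_nonneg_left (hr x u) (norm_nonneg v))
    have h2 := hl_lb x u
    have hD : (‖v‖ * M_r) ^ 2 / (4 * m_l) * (4 * m_l) = (‖v‖ * M_r) ^ 2 :=
      div_mul_cancel₀ _ (by positivity)
    nlinarith [sq_nonneg (2 * m_l * ‖u‖ - ‖v‖ * M_r), norm_nonneg u, norm_nonneg v]
  have key : ∀ w w' : H, ψ x w - ψ x w' ≤ L * (1 + ‖w‖ + ‖w'‖) * ‖w - w'‖ := by
    intro w w'
    rw [sub_le_iff_le_add]
    refine le_of_forall_pos_le_add fun ε hε => ?_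
    set δ : ℝ := min ε 1 with hδ
    have hδ0 : 0 < δ := lt_min hε one_pos
    have hδ1 : δ ≤ 1 := min_le_right _ _
    have hδε : δ ≤ ε := min_le_left _ _
    -- near minimizer for w'
    have hlt : (⨅ u : U, (l x u - ⟪w', r x u⟫_ℝ)) < ψ x w' + δ := by
      rw [← hψ]; linarith
    obtain ⟨u, hu⟩ := exists_lt_of_ciInf_lt hlt
    -- upper bound on ψ x w'
    have hub : ψ x w' ≤ M_l * (1 + ‖ustar‖ ^ 2) := by
      have h1 : ψ x w' ≤ l x ustar - ⟪w', r x ustar⟫_ℝ := by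
        rw [hψ]; exact ciInf_le (hbdd w') ustar
      rw [hustar, inner_zero_right] at h1
      have := hl_ub x ustar
      linarith
    -- lower bound on the value at u
    have hinner : ∀ v : H, ⟪v, r x u⟫_ℝ ≤ ‖v‖ * (M_r * (1 + ‖u‖)) := fun v =>
      (real_inner_le_norm v (r x u)).trans
        (mul_le_mul_of_nonneg_left (hr x u) (norm_nonneg v))
    have hquad : m_l * ‖u‖ ^ 2 ≤ A + M_r * ‖w'‖ * (1 + ‖u‖) := by
      have h2 := hl_lb x u
      have h3 := hinner w'
      have : l x u - ⟪w', r x u⟫_ℝ < M_l * (1 + ‖ustar‖ ^ 2) + δ := lt_of_lt_of_le hu (by linarith)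
      nlinarith
    have hB0 : (0:ℝ) ≤ M_r * ‖w'‖ := by positivity
    have hu_bd : ‖u‖ ≤ (A + 2 * M_r * ‖w'‖) / m_l + 1 := by
      rcases le_or_gt ‖u‖ 1 with h | h
      · have : (0:ℝ) ≤ (A + 2 * M_r * ‖w'‖) / m_l := by positivity
        linarith
      · have h2 : m_l * ‖u‖ ≤ A + 2 * M_r * ‖w'‖ := by nlinarith
        have := (div_le_div_iff_of_pos_right hml).mpr h2
        rw [mul_comm, mul_div_assoc, div_self hml.ne', mul_one] at this
        linarith
    -- final chain
    have step1 : ψ x w ≤ l x u - ⟪w, r x u⟫_ℝ := by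
      rw [hψ]; exact ciInf_le (hbdd w) u
    have step2 : l x u - ⟪w, r x u⟫_ℝ =
        (l x u - ⟪w', r x u⟫_ℝ) + ⟪w' - w, r x u⟫_ℝ := by
      rw [inner_sub_left]; ring
    have step3 : ⟪w' - w, r x u⟫_ℝ ≤ ‖w - w'‖ * (M_r * (1 + ‖u‖)) := by
      have := hinner (w' - w)
      rwa [norm_sub_rev w' w] at this
    have step4 : M_r * (1 + ‖u‖) * ‖w - w'‖ ≤ L * (1 + ‖w‖ + ‖w'‖) * ‖w - w'‖ := by
      apply mul_le_mul_of_nonneg_right _ (norm_nonneg _)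
      have h1 : 1 + ‖u‖ ≤ 2 + A / m_l + 2 * M_r / m_l * ‖w'‖ := by
        have : (A + 2 * M_r * ‖w'‖) / m_l = A / m_l + 2 * M_r / m_l * ‖w'‖ := by
          field_simp
        linarith [hu_bd, this ▸ hu_bd]
      have h2 : 2 + A / m_l + 2 * M_r / m_l * ‖w'‖ ≤
          (2 + A / m_l + 2 * M_r / m_l) * (1 + ‖w‖ + ‖w'‖) := by
        have ha : (0:ℝ) ≤ A / m_l := by positivity
        have hb : (0:ℝ) ≤ 2 * M_r / m_l := by positivity
        nlinarith [norm_nonneg w, norm_nonneg w']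
      calc M_r * (1 + ‖u‖) ≤ M_r * ((2 + A / m_l + 2 * M_r / m_l) * (1 + ‖w‖ + ‖w'‖)) :=
            mul_le_mul_of_nonneg_left (h1.trans h2) hMr.le
        _ = L * (1 + ‖w‖ + ‖w'‖) := by rw [hL]; ring
    have : ψ x w ≤ (ψ x w' + δ) + L * (1 + ‖w‖ + ‖w'‖) * ‖w - w'‖ := by
      calc ψ x w ≤ (l x u - ⟪w', r x u⟫_ℝ) + ⟪w' - w, r x u⟫_ℝ := by
            rw [← step2]; exact step1
        _ ≤ (ψ x w' + δ) + ‖w - w'‖ * (M_r * (1 + ‖u‖)) := by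
            have := hu.le; linarith [step3]
        _ ≤ (ψ x w' + δ) + L * (1 + ‖w‖ + ‖w'‖) * ‖w - w'‖ := by
            rw [mul_comm (‖w - w'‖)]; linarith [step4]
    linarith
  rw [abs_sub_le_iff]
  constructor
  · exact key z z'
  · have h2 := key z' z
    rw [norm_sub_rev z' z] at h2
    have : L * (1 + ‖z'‖ + ‖z‖) * ‖z - z'‖ = L * (1 + ‖z‖ + ‖z'‖) * ‖z - z'‖ := by ring
    linarith
end

section
/- There exists a constant L_ψ > 0 such that |ψ(x,z) − ψ(x′,z)| ≤ L_ψ(1 + |z|²)·min(|x − x′|, 1) for all x, x′ ∈ K and all z ∈ H. -/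
/-!
For fixed `z`, the integrand `u ↦ l x u - ⟪z, r x u⟫` is coercive uniformly in `x`: it is at least
`m_l/2 ‖u‖² - C (1 + ‖z‖²)`, while its infimum is at most `l x u⋆`, which is bounded. Hence every
`1`-near minimiser `u` of the integrand at `x'` satisfies `‖u‖² ≤ C (1 + ‖z‖²)`. At such `u`, moving
from `x'` to `x` changes the integrand by at most `L (1 + ‖z‖²) min(‖x - x'‖, 1)` (for far apart
points the bounds on `l` replace its Lipschitz estimate), and comparing infima through near
minimisers gives the one-sided estimate `ψ x z ≤ ψ x' z + L (1 + ‖z‖²) min(‖x - x'‖, 1)`.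
-/

open scoped InnerProductSpace

theorem ciInf_le_ciInf_add_of_near_minimizers {ι : Type*} [Nonempty ι] {f g : ι → ℝ}
    (hf : BddBelow (Set.range f)) {η δ : ℝ} (hη : 0 < η)
    (h : ∀ i, g i < (⨅ j, g j) + η → f i ≤ g i + δ) :
    ⨅ i, f i ≤ (⨅ i, g i) + δ := by
  refine le_of_forall_pos_lt_add fun ε hε => ?_
  obtain ⟨i, hi⟩ := exists_lt_of_ciInf_lt (lt_add_of_pos_right (⨅ j, g j) (lt_min hε hη))
  calc ⨅ i, f i ≤ f i := ciInf_le hf i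
    _ ≤ g i + δ := h i (hi.trans_le (by gcongr; exact min_le_right ε η))
    _ < (⨅ j, g j) + δ + ε := by linarith [min_le_left ε η]

theorem add_mul_one_add_le_of_sq_le {A B C a b : ℝ} (hA : 0 ≤ A) (hB : 0 ≤ B)
    (hab : a ^ 2 ≤ C * (1 + b ^ 2)) :
    A * (1 + a ^ 2) + B * b * (1 + a) ≤ (A + B) * (1 + C) * (1 + b ^ 2) := by
  have hC : 0 ≤ C := nonneg_of_mul_nonneg_left (le_trans (sq_nonneg a) hab) (by positivity)
  nlinarith [sq_nonneg (b - 1), sq_nonneg (a - b), mul_nonneg hA hC, mul_nonneg hB hC,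
    mul_nonneg (mul_nonneg hA hC) (sq_nonneg b), mul_nonneg (mul_nonneg hB hC) (sq_nonneg b)]

section Hamiltonian

variable {K H U : Type*} [NormedAddCommGroup H] [InnerProductSpace ℝ H] [NormedAddCommGroup U]
  (r : K → U → H) (l : K → U → ℝ)

def hamiltonianIntegrand (x : K) (z : H) (u : U) : ℝ := l x u - ⟪z, r x u⟫_ℝ

variable {M_r L_r m_l c_l M_l L_l : ℝ}

theorem exists_hamiltonianIntegrand_coercive (hMr : 0 ≤ M_r) (hml : 0 < m_l) (hcl : 0 ≤ c_l)
    (hr : ∀ x u, ‖r x u‖ ≤ M_r * (1 + ‖u‖)) (hl_lb : ∀ x u, m_l * ‖u‖ ^ 2 - c_l ≤ l x u) :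
    ∃ C ≥ 0, ∀ x z u,
      m_l / 2 * ‖u‖ ^ 2 - C * (1 + ‖z‖ ^ 2) ≤ hamiltonianIntegrand r l x z u := by
  refine ⟨c_l + M_r + M_r ^ 2 / (2 * m_l), by positivity, fun x z u => ?_⟩
  have hinner : ⟪z, r x u⟫_ℝ ≤ ‖z‖ * (M_r * (1 + ‖u‖)) :=
    (real_inner_le_norm z _).trans (mul_le_mul_of_nonneg_left (hr x u) (norm_nonneg z))
  have hyoung : M_r * ‖z‖ * ‖u‖ ≤ m_l / 2 * ‖u‖ ^ 2 + M_r ^ 2 / (2 * m_l) * ‖z‖ ^ 2 := by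
    have := sq_nonneg (m_l * ‖u‖ - M_r * ‖z‖)
    field_simp
    nlinarith
  have hz : ‖z‖ ≤ 1 + ‖z‖ ^ 2 := by nlinarith [sq_nonneg (‖z‖ - 1)]
  have hq : 0 ≤ M_r ^ 2 / (2 * m_l) := by positivity
  unfold hamiltonianIntegrand
  nlinarith [hl_lb x u, mul_le_mul_of_nonneg_left hz hMr, mul_nonneg hcl (sq_nonneg ‖z‖)]

theorem bddBelow_range_hamiltonianIntegrand (hMr : 0 ≤ M_r) (hml : 0 < m_l) (hcl : 0 ≤ c_l)
    (hr : ∀ x u, ‖r x u‖ ≤ M_r * (1 + ‖u‖)) (hl_lb : ∀ x u, m_l * ‖u‖ ^ 2 - c_l ≤ l x u)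
    (x : K) (z : H) : BddBelow (Set.range (hamiltonianIntegrand r l x z)) := by
  obtain ⟨C, -, hC⟩ := exists_hamiltonianIntegrand_coercive r l hMr hml hcl hr hl_lb
  refine ⟨-(C * (1 + ‖z‖ ^ 2)), ?_⟩
  rintro _ ⟨u, rfl⟩
  nlinarith [hC x z u, sq_nonneg ‖u‖]

theorem exists_norm_sq_le_of_near_minimizer (hMr : 0 ≤ M_r) (hml : 0 < m_l) (hcl : 0 ≤ c_l)
    (hr : ∀ x u, ‖r x u‖ ≤ M_r * (1 + ‖u‖)) (ustar : U) (hustar : ∀ x, r x ustar = 0)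
    (hl_lb : ∀ x u, m_l * ‖u‖ ^ 2 - c_l ≤ l x u) (hl_ub : ∀ x u, l x u ≤ M_l * (1 + ‖u‖ ^ 2)) :
    ∃ C ≥ 0, ∀ x z u, hamiltonianIntegrand r l x z u < (⨅ v, hamiltonianIntegrand r l x z v) + 1 →
      ‖u‖ ^ 2 ≤ C * (1 + ‖z‖ ^ 2) := by
  obtain ⟨C, hC, hcoer⟩ := exists_hamiltonianIntegrand_coercive r l hMr hml hcl hr hl_lb
  set A := M_l * (1 + ‖ustar‖ ^ 2)
  refine ⟨2 * (max A 0 + 1 + C) / m_l, by positivity, fun x z u hu => ?_⟩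
  have hinf : ⨅ v, hamiltonianIntegrand r l x z v ≤ A := by
    refine (ciInf_le (bddBelow_range_hamiltonianIntegrand r l hMr hml hcl hr hl_lb x z) ustar).trans ?_
    simpa [hamiltonianIntegrand, hustar] using hl_ub x ustar
  rw [div_mul_eq_mul_div, le_div_iff₀ hml]
  nlinarith [hcoer x z u, le_max_left A 0, le_max_right A 0, sq_nonneg ‖z‖,
    mul_nonneg (le_max_right A 0) (sq_nonneg ‖z‖)]

theorem lagrangian_sub_le [NormedAddCommGroup K] (hml : 0 ≤ m_l) (hcl : 0 ≤ c_l) (hMl : 0 ≤ M_l) (hLl : 0 ≤ L_l)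
    (hl_lb : ∀ x u, m_l * ‖u‖ ^ 2 - c_l ≤ l x u) (hl_ub : ∀ x u, l x u ≤ M_l * (1 + ‖u‖ ^ 2))
    (hl_lip : ∀ x y u, |l x u - l y u| ≤ L_l * ‖x - y‖) (x y : K) (u : U) :
    l x u - l y u ≤ (L_l + M_l + c_l) * (1 + ‖u‖ ^ 2) * min ‖x - y‖ 1 := by
  have hw : 1 ≤ 1 + ‖u‖ ^ 2 := le_add_of_nonneg_right (sq_nonneg _)
  rcases le_total ‖x - y‖ 1 with hd | hd
  · rw [min_eq_left hd]
    calc l x u - l y u ≤ L_l * ‖x - y‖ := (abs_le.1 (hl_lip x y u)).2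
      _ ≤ (L_l + M_l + c_l) * (1 + ‖u‖ ^ 2) * ‖x - y‖ := by
        gcongr
        nlinarith
  · rw [min_eq_right hd, mul_one]
    nlinarith [hl_ub x u, hl_lb y u, sq_nonneg ‖u‖]

theorem hamiltonianIntegrand_le_add_of_norm_sq_le [NormedAddCommGroup K] (hml : 0 ≤ m_l) (hcl : 0 ≤ c_l)
    (hMl : 0 ≤ M_l) (hLl : 0 ≤ L_l) (hLr : 0 ≤ L_r)
    (hr_lip : ∀ x y u, ‖r x u - r y u‖ ≤ L_r * min ‖x - y‖ 1 * (1 + ‖u‖))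
    (hl_lb : ∀ x u, m_l * ‖u‖ ^ 2 - c_l ≤ l x u) (hl_ub : ∀ x u, l x u ≤ M_l * (1 + ‖u‖ ^ 2))
    (hl_lip : ∀ x y u, |l x u - l y u| ≤ L_l * ‖x - y‖) {C : ℝ} (x y : K) (z : H) (u : U)
    (hu : ‖u‖ ^ 2 ≤ C * (1 + ‖z‖ ^ 2)) :
    hamiltonianIntegrand r l x z u ≤ hamiltonianIntegrand r l y z u +
      (L_l + M_l + c_l + L_r) * (1 + C) * (1 + ‖z‖ ^ 2) * min ‖x - y‖ 1 := by
  have hl := lagrangian_sub_le l hml hcl hMl hLl hl_lb hl_ub hl_lip x y u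
  have hrz : ⟪z, r y u⟫_ℝ - ⟪z, r x u⟫_ℝ ≤ L_r * ‖z‖ * (1 + ‖u‖) * min ‖x - y‖ 1 := by
    rw [← inner_sub_right]
    calc _ ≤ ‖z‖ * ‖r y u - r x u‖ := real_inner_le_norm _ _
      _ ≤ ‖z‖ * (L_r * min ‖y - x‖ 1 * (1 + ‖u‖)) := by gcongr; exact hr_lip y x u
      _ = L_r * ‖z‖ * (1 + ‖u‖) * min ‖x - y‖ 1 := by rw [norm_sub_rev]; ring
  have hweight := add_mul_one_add_le_of_sq_le (by positivity : 0 ≤ L_l + M_l + c_l) hLr hu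
  have hmin : 0 ≤ min ‖x - y‖ 1 := le_min (norm_nonneg _) zero_le_one
  unfold hamiltonianIntegrand
  nlinarith [mul_le_mul_of_nonneg_right hweight hmin]

end Hamiltonian

theorem hamiltonian_lipschitz_in_x_general
    {K H U : Type*}
    [NormedAddCommGroup K]
    [NormedAddCommGroup H] [InnerProductSpace ℝ H]
    [NormedAddCommGroup U]
    (r : K → U → H) (l : K → U → ℝ)
    (M_r L_r m_l c_l M_l L_l : ℝ)
    (hMr : 0 < M_r) (hLr : 0 < L_r) (hml : 0 < m_l) (hcl : 0 < c_l)
    (hMl : 0 < M_l) (hLl : 0 < L_l)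
    (hr : ∀ x u, ‖r x u‖ ≤ M_r * (1 + ‖u‖))
    (hr_lip : ∀ x y u, ‖r x u - r y u‖ ≤ L_r * min ‖x - y‖ 1 * (1 + ‖u‖))
    (ustar : U) (hustar : ∀ x, r x ustar = 0)
    (hl_lb : ∀ x u, m_l * ‖u‖ ^ 2 - c_l ≤ l x u)
    (hl_ub : ∀ x u, l x u ≤ M_l * (1 + ‖u‖ ^ 2))
    (hl_lip : ∀ x y u, |l x u - l y u| ≤ L_l * ‖x - y‖)
    (ψ : K → H → ℝ)
    (hψ : ∀ x z, ψ x z = ⨅ u : U, (l x u - ⟪z, r x u⟫_ℝ)) :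
    ∃ L_ψ > 0, ∀ (x x' : K) (z : H),
      |ψ x z - ψ x' z| ≤ L_ψ * (1 + ‖z‖ ^ 2) * min ‖x - x'‖ 1 := by
  have : Nonempty U := ⟨ustar⟩
  obtain ⟨C, hC, hnear⟩ := exists_norm_sq_le_of_near_minimizer r l hMr.le hml hcl.le hr ustar
    hustar hl_lb hl_ub
  set L := (L_l + M_l + c_l + L_r) * (1 + C)
  have hone_sided : ∀ x x' z, ψ x z - ψ x' z ≤ L * (1 + ‖z‖ ^ 2) * min ‖x - x'‖ 1 := by
    intro x x' z
    rw [hψ, hψ, sub_le_iff_le_add']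
    refine ciInf_le_ciInf_add_of_near_minimizers
      (bddBelow_range_hamiltonianIntegrand r l hMr.le hml hcl.le hr hl_lb x z) one_pos
      fun u hu => ?_
    exact hamiltonianIntegrand_le_add_of_norm_sq_le r l hml.le hcl.le hMl.le hLl.le hLr.le hr_lip
      hl_lb hl_ub hl_lip x x' z u (hnear x' z u hu)
  refine ⟨L, by positivity, fun x x' z => abs_sub_le_iff.2 ⟨hone_sided x x' z, ?_⟩⟩
  simpa only [norm_sub_rev] using hone_sided x' x z

/-- There exists a constant `L_ψ > 0` such that
`|ψ(x,z) − ψ(x′,z)| ≤ L_ψ (1 + ‖z‖²) · min(‖x − x′‖, 1)` for all `x, x′ ∈ K`, `z ∈ H`. -/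
theorem hamiltonian_lipschitz_in_x
    {K H U : Type*}
    [NormedAddCommGroup K] [InnerProductSpace ℝ K] [CompleteSpace K]
    [TopologicalSpace.SeparableSpace K]
    [NormedAddCommGroup H] [InnerProductSpace ℝ H] [CompleteSpace H]
    [TopologicalSpace.SeparableSpace H]
    [NormedAddCommGroup U] [InnerProductSpace ℝ U] [CompleteSpace U]
    [TopologicalSpace.SeparableSpace U]
    (r : K → U → H) (l : K → U → ℝ)
    (M_r L_r m_l c_l M_l L_l : ℝ)
    (hMr : 0 < M_r) (hLr : 0 < L_r) (hml : 0 < m_l) (hcl : 0 < c_l)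
    (hMl : 0 < M_l) (hLl : 0 < L_l)
    (hr : ∀ x u, ‖r x u‖ ≤ M_r * (1 + ‖u‖))
    (hr_lip : ∀ x y u, ‖r x u - r y u‖ ≤ L_r * min ‖x - y‖ 1 * (1 + ‖u‖))
    (ustar : U) (hustar : ∀ x, r x ustar = 0)
    (hl_lb : ∀ x u, m_l * ‖u‖ ^ 2 - c_l ≤ l x u)
    (hl_ub : ∀ x u, l x u ≤ M_l * (1 + ‖u‖ ^ 2))
    (hl_lip : ∀ x y u, |l x u - l y u| ≤ L_l * ‖x - y‖)
    (ψ : K → H → ℝ)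
    (hψ : ∀ x z, ψ x z = ⨅ u : U, (l x u - ⟪z, r x u⟫_ℝ)) :
    ∃ L_ψ > 0, ∀ (x x' : K) (z : H),
      |ψ x z - ψ x' z| ≤ L_ψ * (1 + ‖z‖ ^ 2) * min ‖x - x'‖ 1 :=
  hamiltonian_lipschitz_in_x_general r l M_r L_r m_l c_l M_l L_l hMr hLr hml hcl hMl hLl hr hr_lip
    ustar hustar hl_lb hl_ub hl_lip ψ hψ
end

section
/- There exists a constant c > 0, depending only on m_l, c_l, M_l, M_r and |u⋆|, such that for all x ∈ K and z ∈ H the infimum defining ψ may be restricted to a ball: ψ(x,z) = inf { l(x,u) − ⟨z, r(x,u)⟩ : u ∈ U, |u| ≤ c(1+|z|) }. -/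
open scoped InnerProductSpace

set_option maxHeartbeats 2000000

/-- There is a constant `c > 0` such that for all `x ∈ K`, `z ∈ H`,
the infimum defining `ψ` may be restricted to the ball `{u : ‖u‖ ≤ c(1+‖z‖)}`. -/
theorem hamiltonian_inf_on_ball
    {K H U : Type*}
    [NormedAddCommGroup K] [InnerProductSpace ℝ K] [CompleteSpace K]
    [TopologicalSpace.SeparableSpace K]
    [NormedAddCommGroup H] [InnerProductSpace ℝ H] [CompleteSpace H]
    [TopologicalSpace.SeparableSpace H]
    [NormedAddCommGroup U] [InnerProductSpace ℝ U] [CompleteSpace U]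
    [TopologicalSpace.SeparableSpace U]
    (r : K → U → H) (l : K → U → ℝ)
    (M_r m_l c_l M_l : ℝ)
    (hMr : 0 < M_r) (hml : 0 < m_l) (hcl : 0 < c_l) (hMl : 0 < M_l)
    (hr : ∀ x u, ‖r x u‖ ≤ M_r * (1 + ‖u‖))
    (ustar : U) (hustar : ∀ x, r x ustar = 0)
    (hl_lb : ∀ x u, m_l * ‖u‖ ^ 2 - c_l ≤ l x u)
    (hl_ub : ∀ x u, l x u ≤ M_l * (1 + ‖u‖ ^ 2))
    (ψ : K → H → ℝ)
    (hψ : ∀ x z, ψ x z = ⨅ u : U, (l x u - ⟪z, r x u⟫_ℝ)) :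
    ∃ c > 0, ∀ (x : K) (z : H),
      ψ x z =
        sInf ((fun u : U => l x u - ⟪z, r x u⟫_ℝ) '' {u : U | ‖u‖ ≤ c * (1 + ‖z‖)}) := by
  classical
  set A : ℝ := M_l * (1 + ‖ustar‖ ^ 2) with hAdef
  have hA : 0 < A := by positivity
  set B : ℝ := A + c_l + M_r with hBdef
  have hB : 0 < B := by positivity
  refine ⟨(m_l + m_l * ‖ustar‖ + 2 * M_r + 2 * B) / m_l, by positivity, ?_⟩
  intro x z
  set c : ℝ := (m_l + m_l * ‖ustar‖ + 2 * M_r + 2 * B) / m_l with hcdef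
  have hmc : m_l * c = m_l + m_l * ‖ustar‖ + 2 * M_r + 2 * B := by
    rw [hcdef]; field_simp
  have hc1 : (1 : ℝ) ≤ c := by
    nlinarith [norm_nonneg ustar, hMr.le, hB.le, hml]
  have hcu : ‖ustar‖ ≤ c := by
    nlinarith [norm_nonneg ustar, hMr.le, hB.le, hml]
  have hzs : (0 : ℝ) ≤ ‖z‖ := norm_nonneg z
  set g : U → ℝ := fun u : U => l x u - ⟪z, r x u⟫_ℝ with hg
  set S : Set U := {u : U | ‖u‖ ≤ c * (1 + ‖z‖)} with hSdef
  have hustarS : ustar ∈ S := by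
    simp only [hSdef, Set.mem_setOf_eq]
    nlinarith [mul_nonneg (le_trans zero_le_one hc1) hzs]
  have hgustar : g ustar ≤ A := by
    have : g ustar = l x ustar := by
      simp [hg, hustar x]
    rw [this, hAdef]
    exact hl_ub x ustar
  have hglb : ∀ u : U, m_l * ‖u‖ ^ 2 - c_l - M_r * ‖z‖ - M_r * ‖z‖ * ‖u‖ ≤ g u := by
    intro u
    have h1 := hl_lb x u
    have h2 : ⟪z, r x u⟫_ℝ ≤ ‖z‖ * ‖r x u‖ := real_inner_le_norm z (r x u)
    have h3 := hr x u
    have h4 : ⟪z, r x u⟫_ℝ ≤ ‖z‖ * (M_r * (1 + ‖u‖)) :=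
      h2.trans (by nlinarith [norm_nonneg (r x u)])
    simp only [hg]
    nlinarith
  have hkey : ∀ u : U, u ∉ S → g ustar ≤ g u := by
    intro u hu
    have ht : c * (1 + ‖z‖) ≤ ‖u‖ := (not_le.1 hu).le
    have ht0 : (0 : ℝ) ≤ ‖u‖ := norm_nonneg u
    have hlb := hglb u
    -- abbreviations
    set t : ℝ := ‖u‖
    set s : ℝ := ‖z‖
    have hcpos : (0 : ℝ) < c := lt_of_lt_of_le one_pos hc1
    -- (m_l/2) t^2 ≥ M_r s t
    have hmlc2B : 2 * B ≤ m_l * c := by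
      nlinarith [hmc, mul_nonneg hml.le (norm_nonneg ustar), hMr.le, hml.le]
    have hmlc2Mr : 2 * M_r ≤ m_l * c := by
      nlinarith [hmc, mul_nonneg hml.le (norm_nonneg ustar), hB.le, hml.le]
    have h1 : M_r * s * t ≤ (m_l / 2) * t ^ 2 := by
      have hp1 : 0 ≤ m_l * ((t - c * (1 + s)) * t) :=
        mul_nonneg hml.le (mul_nonneg (by linarith) ht0)
      have hp2 : 0 ≤ (m_l * c - 2 * M_r) * (s * t) :=
        mul_nonneg (by linarith) (mul_nonneg hzs ht0)
      have hp3 : 0 ≤ m_l * c * t := mul_nonneg (mul_nonneg hml.le hcpos.le) ht0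
      nlinarith [hp1, hp2, hp3]
    -- (m_l/2) t^2 ≥ A + c_l + M_r s
    have h2 : A + c_l + M_r * s ≤ (m_l / 2) * t ^ 2 := by
      have hcs0 : 0 ≤ c * (1 + s) := by positivity
      have hsq : (c * (1 + s)) ^ 2 ≤ t ^ 2 := by nlinarith [hcs0, ht, ht0]
      -- (m_l/2) c^2 (1+s)^2 ≥ B (1+s)^2 ≥ B (1+s) ≥ A + c_l + M_r s
      have hb1 : B * (1 + s) ≤ (m_l / 2) * (c * (1 + s)) ^ 2 := by
        have e1 : B * (1 + s) ≤ B * (1 + s) ^ 2 := by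
          nlinarith [mul_nonneg (mul_nonneg hB.le (by linarith : (0:ℝ) ≤ 1 + s)) hzs]
        have e2 : B * (1 + s) ^ 2 ≤ (m_l * c / 2) * c * (1 + s) ^ 2 := by
          have hq : 0 ≤ (m_l * c / 2 - B) * (1 + s) ^ 2 :=
            mul_nonneg (by linarith) (sq_nonneg (1 + s))
          have : (m_l * c / 2) * c * (1 + s) ^ 2 ≥ (m_l * c / 2) * (1 + s) ^ 2 := by
            have hq2 : 0 ≤ (m_l * c / 2) * (c - 1) * (1 + s) ^ 2 :=
              mul_nonneg (mul_nonneg (by nlinarith [hmlc2B, hB.le]) (by linarith)) (sq_nonneg (1 + s))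
            nlinarith [hq2]
          nlinarith [hq, this]
        have e3 : (m_l * c / 2) * c * (1 + s) ^ 2 = (m_l / 2) * (c * (1 + s)) ^ 2 := by ring
        exact e1.trans (le_of_le_of_eq e2 e3)
      have hb2 : A + c_l + M_r * s ≤ B * (1 + s) := by
        rw [hBdef]
        nlinarith [mul_nonneg hA.le hzs, mul_nonneg hcl.le hzs]
      have hm2 : (m_l / 2) * (c * (1 + s)) ^ 2 ≤ (m_l / 2) * t ^ 2 :=
        mul_le_mul_of_nonneg_left hsq (by positivity)
      exact hb2.trans (hb1.trans hm2)
    have : A ≤ g u := by linarith [hlb, h1, h2]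
    linarith
  -- uniform lower bound
  have hbdd : BddBelow (Set.range g) := by
    refine ⟨-c_l - M_r * ‖z‖ - (M_r * ‖z‖) ^ 2 / (4 * m_l), ?_⟩
    rintro _ ⟨u, rfl⟩
    have hlb := hglb u
    have hq : -((M_r * ‖z‖) ^ 2) / (4 * m_l) ≤ m_l * ‖u‖ ^ 2 - M_r * ‖z‖ * ‖u‖ := by
      rw [div_le_iff₀ (by positivity)]
      nlinarith [sq_nonneg (2 * m_l * ‖u‖ - M_r * ‖z‖)]
    have : -c_l - M_r * ‖z‖ - (M_r * ‖z‖) ^ 2 / (4 * m_l) ≤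
        m_l * ‖u‖ ^ 2 - c_l - M_r * ‖z‖ - M_r * ‖z‖ * ‖u‖ := by
      have : -((M_r * ‖z‖) ^ 2) / (4 * m_l) = -((M_r * ‖z‖) ^ 2 / (4 * m_l)) := by ring
      linarith [hq]
    exact this.trans hlb
  have hbddS : BddBelow (g '' S) := hbdd.mono (Set.image_subset_range g S)
  rw [hψ]
  have hiInf : (⨅ u : U, g u) = sInf (Set.range g) := rfl
  rw [hiInf]
  apply le_antisymm
  · exact csInf_le_csInf hbdd ⟨g ustar, Set.mem_image_of_mem g hustarS⟩
      (Set.image_subset_range g S)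
  · refine le_csInf ⟨g ustar, Set.mem_range_self _⟩ ?_
    rintro b ⟨u, rfl⟩
    by_cases hu : u ∈ S
    · exact csInf_le hbddS (Set.mem_image_of_mem g hu)
    · exact (csInf_le hbddS (Set.mem_image_of_mem g hustarS)).trans (hkey u hu)
end

section
/- Define b̂ : K → K by b̂(x) := b(x) + (1/2) Σ_{m=1}^∞ λ_m² Dσ_m(x)[σ(x)e_m], where σ_m : K → K is the map σ_m(x) := σ(x)e_m and Dσ_m(x) is its Fréchet derivative at x. Then for every x ∈ K the series converges absolutely in K, and b̂ is Lipschitz continuous on K. -/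
/-!
With `C` a common bound for `σ`, `Dσ` and `D²σ`, the `m`-th term `Dσ(x)[σ(x)eₘ] eₘ` is bounded
by `C²`, and, being bilinear in the bounded `C`-Lipschitz maps `Dσ` and `σ`, it is
`2C²`-Lipschitz in `x`, uniformly in `m`. The weights `λₘ²` are summable, so the series
converges absolutely and is `2C² Σ λₘ²`-Lipschitz; adding `b` keeps it Lipschitz.
-/

open scoped NNReal

section Lipschitz

variable {ι α E F : Type*} [PseudoMetricSpace α]

theorem LipschitzWith.clm_apply {𝕜 : Type*} [NontriviallyNormedField 𝕜]
    [SeminormedAddCommGroup E] [NormedSpace 𝕜 E] [SeminormedAddCommGroup F] [NormedSpace 𝕜 F]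
    {A : α → E →L[𝕜] F} {u : α → E} {KA Ku MA Mu : ℝ≥0}
    (hA : LipschitzWith KA A) (hu : LipschitzWith Ku u)
    (hA_bd : ∀ x, ‖A x‖ ≤ MA) (hu_bd : ∀ x, ‖u x‖ ≤ Mu) :
    LipschitzWith (MA * Ku + KA * Mu) fun x => A x (u x) := by
  refine LipschitzWith.of_dist_le_mul fun x y => ?_
  have hsplit : A x (u x) - A y (u y) = A x (u x - u y) + (A x - A y) (u y) := by
    simp only [map_sub, sub_apply, sub_add_sub_cancel]
  rw [dist_eq_norm, hsplit]
  calc ‖A x (u x - u y) + (A x - A y) (u y)‖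
      ≤ ‖A x‖ * ‖u x - u y‖ + ‖A x - A y‖ * ‖u y‖ :=
        (norm_add_le _ _).trans (add_le_add ((A x).le_opNorm _) ((A x - A y).le_opNorm _))
    _ ≤ MA * (Ku * dist x y) + (KA * dist x y) * Mu := by
        rw [← dist_eq_norm, ← dist_eq_norm]
        gcongr
        exacts [hA_bd x, hu.dist_le_mul x y, hA.dist_le_mul x y, hu_bd y]
    _ = ↑(MA * Ku + KA * Mu) * dist x y := by push_cast; ring

theorem LipschitzWith.tsum [NormedAddCommGroup E] {f : ι → α → E} {K : ι → ℝ≥0}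
    (hf : ∀ i, LipschitzWith (K i) (f i)) (hK : Summable K)
    (hf_sum : ∀ x, Summable fun i => f i x) :
    LipschitzWith (∑' i, K i) fun x => ∑' i, f i x := by
  refine LipschitzWith.of_dist_le_mul fun x y => ?_
  have hK_dist : Summable fun i => (K i : ℝ) * dist x y :=
    (NNReal.summable_coe.2 hK).mul_right _
  have hdiff_le : ∀ i, ‖f i x - f i y‖ ≤ K i * dist x y := fun i => by
    rw [← dist_eq_norm]; exact (hf i).dist_le_mul x y
  have hdiff_sum : Summable fun i => ‖f i x - f i y‖ :=
    hK_dist.of_nonneg_of_le (fun _ => norm_nonneg _) hdiff_le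
  calc dist (∑' i, f i x) (∑' i, f i y)
      = ‖∑' i, (f i x - f i y)‖ := by rw [dist_eq_norm, (hf_sum x).tsum_sub (hf_sum y)]
    _ ≤ ∑' i, ‖f i x - f i y‖ := norm_tsum_le_tsum_norm hdiff_sum
    _ ≤ ∑' i, (K i : ℝ) * dist x y := hdiff_sum.tsum_le_tsum hdiff_le hK_dist
    _ = ↑(∑' i, K i) * dist x y := by rw [tsum_mul_right, NNReal.coe_tsum]

end Lipschitz

section DriftCorrection

variable {𝕜 E F : Type*} [RCLike 𝕜] [NormedAddCommGroup E] [NormedSpace 𝕜 E]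
  [NormedAddCommGroup F] [NormedSpace 𝕜 F]

noncomputable def driftCorrectionTerm (σ : E → F →L[𝕜] E) (v : F) (x : E) : E :=
  fderiv 𝕜 (fun y => σ y v) x (σ x v)

variable {σ : E → F →L[𝕜] E}

theorem fderiv_clm_apply_const {x : E} (hσ : DifferentiableAt 𝕜 σ x) (v : F) :
    fderiv 𝕜 (fun y => σ y v) x = (fderiv 𝕜 σ x).flip v := by
  simp [fderiv_clm_apply hσ (differentiableAt_const v)]

theorem driftCorrectionTerm_eq (hσ : Differentiable 𝕜 σ) (v : F) :
    driftCorrectionTerm σ v = fun x => fderiv 𝕜 σ x (σ x v) v := by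
  ext x
  rw [driftCorrectionTerm, fderiv_clm_apply_const (hσ x), ContinuousLinearMap.flip_apply]

variable {C : ℝ≥0} (hσ : Differentiable 𝕜 σ) (hσ_bd : ∀ x, ‖σ x‖ ≤ C)
  (hDσ_bd : ∀ x, ‖fderiv 𝕜 σ x‖ ≤ C)
include hσ hσ_bd hDσ_bd

theorem norm_driftCorrectionTerm_le (v : F) (x : E) :
    ‖driftCorrectionTerm σ v x‖ ≤ C ^ 2 * ‖v‖ ^ 2 := by
  rw [driftCorrectionTerm_eq hσ]
  calc ‖fderiv 𝕜 σ x (σ x v) v‖ ≤ ‖fderiv 𝕜 σ x‖ * (‖σ x‖ * ‖v‖) * ‖v‖ :=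
        ((fderiv 𝕜 σ x).le_opNorm₂ _ _).trans (by gcongr; exact (σ x).le_opNorm v)
    _ ≤ C * (C * ‖v‖) * ‖v‖ := by gcongr; exacts [hDσ_bd x, hσ_bd x]
    _ = C ^ 2 * ‖v‖ ^ 2 := by ring

theorem lipschitzWith_driftCorrectionTerm (hDσ_lip : LipschitzWith C (fderiv 𝕜 σ)) (v : F) :
    LipschitzWith (2 * C ^ 2 * ‖v‖₊ ^ 2) (driftCorrectionTerm σ v) := by
  have hσ_lip : LipschitzWith C σ :=
    lipschitzWith_of_nnnorm_fderiv_le hσ fun x => NNReal.coe_le_coe.1 (hDσ_bd x)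
  have hσv_lip : LipschitzWith (‖v‖₊ * C) fun x => σ x v :=
    (ContinuousLinearMap.lipschitz_apply v).comp hσ_lip
  have hσv_bd : ∀ x, ‖σ x v‖ ≤ ↑(C * ‖v‖₊) := fun x =>
    ((σ x).le_opNorm v).trans (by push_cast; gcongr; exact hσ_bd x)
  have hlip := (ContinuousLinearMap.lipschitz_apply v).comp
    (hDσ_lip.clm_apply hσv_lip hDσ_bd hσv_bd)
  rw [driftCorrectionTerm_eq hσ]
  exact hlip.weaken (le_of_eq (by ring))

end DriftCorrection

theorem corrected_drift_lipschitz_general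
    {K H : Type*}
    [NormedAddCommGroup K] [InnerProductSpace ℝ K] [CompleteSpace K]
    [NormedAddCommGroup H] [InnerProductSpace ℝ H]
    (e : HilbertBasis ℕ ℝ H)
    (lam : ℕ → ℝ) (hlam : Summable fun m => lam m ^ 2)
    (b : K → K) (L_b : NNReal) (hb : LipschitzWith L_b b)
    (σ : K → H →L[ℝ] K) (hσ : ContDiff ℝ 2 σ)
    (C_σ : ℝ)
    (hσ_bd : ∀ x : K, ‖σ x‖ ≤ C_σ)
    (hDσ_bd : ∀ x : K, ‖fderiv ℝ σ x‖ ≤ C_σ)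
    (hD2σ_bd : ∀ x : K, @Norm.norm _ ContinuousLinearMap.hasOpNorm (fderiv ℝ (fderiv ℝ σ) x) ≤ C_σ) :
    (∀ x : K,
      Summable fun m =>
        ‖lam m ^ 2 • (fderiv ℝ (fun y : K => (σ y) (e m)) x) ((σ x) (e m))‖) ∧
    ∃ L : NNReal,
      LipschitzWith L (fun x : K =>
        b x + (1 / 2 : ℝ) •
          ∑' m, lam m ^ 2 • (fderiv ℝ (fun y : K => (σ y) (e m)) x) ((σ x) (e m))) := by
  set C := C_σ.toNNReal
  have hσ_le x : ‖σ x‖ ≤ C := (hσ_bd x).trans (Real.le_coe_toNNReal _)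
  have hDσ_le x : ‖fderiv ℝ σ x‖ ≤ C := (hDσ_bd x).trans (Real.le_coe_toNNReal _)
  have hσ_diff : Differentiable ℝ σ := hσ.differentiable (by norm_num)
  have hDσ_lip : LipschitzWith C (fderiv ℝ σ) :=
    lipschitzWith_of_nnnorm_fderiv_le
      ((hσ.fderiv_right (m := 1) le_rfl).differentiable one_ne_zero)
      fun x => NNReal.coe_le_coe.1 ((hD2σ_bd x).trans (Real.le_coe_toNNReal _))
  have he m : ‖e m‖₊ = 1 := NNReal.eq (e.orthonormal.1 m)
  have hterm_le m x : ‖driftCorrectionTerm σ (e m) x‖ ≤ C ^ 2 := by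
    simpa [e.orthonormal.1 m] using norm_driftCorrectionTerm_le hσ_diff hσ_le hDσ_le (e m) x
  have hterm_lip m : LipschitzWith (2 * C ^ 2) (driftCorrectionTerm σ (e m)) := by
    simpa [he m] using
      lipschitzWith_driftCorrectionTerm hσ_diff hσ_le hDσ_le hDσ_lip (e m)
  have hsum x : Summable fun m => ‖lam m ^ 2 • driftCorrectionTerm σ (e m) x‖ :=
    (hlam.mul_right ((C : ℝ) ^ 2)).of_nonneg_of_le (fun _ => norm_nonneg _) fun m => by
      rw [norm_smul, Real.norm_of_nonneg (sq_nonneg _)]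
      exact mul_le_mul_of_nonneg_left (hterm_le m x) (sq_nonneg _)
  have hlam_nnnorm : Summable fun m => ‖lam m ^ 2‖₊ := by
    simpa [← NNReal.summable_coe, Real.norm_of_nonneg (sq_nonneg _)] using hlam
  exact ⟨hsum, _, hb.add <| (lipschitzWith_smul _).comp <|
    LipschitzWith.tsum (fun m => (lipschitzWith_smul (lam m ^ 2)).comp (hterm_lip m))
      (hlam_nnnorm.mul_right _) fun x => (hsum x).of_norm⟩

/-- The corrected drift
`b̂(x) = b(x) + (1/2) Σₘ λₘ² Dσₘ(x)[σ(x)eₘ]` (with `σₘ(x) = σ(x)eₘ`) is given by an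
absolutely convergent series and is Lipschitz continuous on `K`. -/
theorem corrected_drift_lipschitz
    {K H : Type*}
    [NormedAddCommGroup K] [InnerProductSpace ℝ K] [CompleteSpace K]
    [TopologicalSpace.SeparableSpace K]
    [NormedAddCommGroup H] [InnerProductSpace ℝ H] [CompleteSpace H]
    [TopologicalSpace.SeparableSpace H]
    (e : HilbertBasis ℕ ℝ H)
    (lam : ℕ → ℝ) (hlam : Summable fun m => lam m ^ 2)
    (b : K → K) (L_b : NNReal) (hb : LipschitzWith L_b b)
    (σ : K → H →L[ℝ] K) (hσ : ContDiff ℝ 2 σ)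
    (C_σ : ℝ)
    (hσ_bd : ∀ x : K, ‖σ x‖ ≤ C_σ)
    (hDσ_bd : ∀ x : K, ‖fderiv ℝ σ x‖ ≤ C_σ)
    (hD2σ_bd : ∀ x : K, @Norm.norm _ ContinuousLinearMap.hasOpNorm (fderiv ℝ (fderiv ℝ σ) x) ≤ C_σ) :
    (∀ x : K,
      Summable fun m =>
        ‖lam m ^ 2 • (fderiv ℝ (fun y : K => (σ y) (e m)) x) ((σ x) (e m))‖) ∧
    ∃ L : NNReal,
      LipschitzWith L (fun x : K =>
        b x + (1 / 2 : ℝ) •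
          ∑' m, lam m ^ 2 • (fderiv ℝ (fun y : K => (σ y) (e m)) x) ((σ x) (e m))) :=
  corrected_drift_lipschitz_general e lam hlam b L_b hb σ hσ C_σ hσ_bd hDσ_bd hD2σ_bd
end
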